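/- arXiv:1902.03291 — 6 statements merged into one kernel-verified Lean document; each statement's English description precedes it below -/
import Mathlib

section
/- Let n ≥ 3 be an integer and let A = (a_{st}) be a symmetric n×n real matrix with zero diagonal (a_{ss} = 0 for all s). Then every row sum and every column sum of its U-centered version vanishes: for all t, Σ_{u=1}^n ã_{ut} = 0, and for all s, Σ_{v=1}^n ã_{sv} = 0. -/
open Finset Matrix

/-- The `𝒰`-centered version `Ã` of an `n × n` real matrix `A`:
`ã_{st} = a_{st} − (1/(n−2))·Σ_v a_{sv} − (1/(n−2))·Σ_u a_{ut}
          + (1/((n−1)(n−2)))·Σ_{u,v} a_{uv}` for `s ≠ t`, and `ã_{ss} = 0`. -/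
noncomputable def uCenter {n : ℕ} (A : Matrix (Fin n) (Fin n) ℝ) :
    Matrix (Fin n) (Fin n) ℝ := fun s t =>
  if s = t then 0 else
    A s t - (∑ v, A s v) / ((n : ℝ) - 2) - (∑ u, A u t) / ((n : ℝ) - 2)
      + (∑ u, ∑ v, A u v) / (((n : ℝ) - 1) * ((n : ℝ) - 2))

lemma uCenter_col_sum_aux (n : ℕ) (hn : 3 ≤ n) (A : Matrix (Fin n) (Fin n) ℝ)
    (hsym : ∀ u v, A u v = A v u) (hdiag : ∀ s, A s s = 0) (t : Fin n) :
    ∑ u, uCenter A u t = 0 := by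
  have h3 : (3:ℝ) ≤ (n:ℝ) := by exact_mod_cast hn
  have h2 : (n:ℝ) - 2 ≠ 0 := ne_of_gt (by linarith)
  have h1 : (n:ℝ) - 1 ≠ 0 := ne_of_gt (by linarith)
  rw [← Finset.add_sum_erase _ _ (Finset.mem_univ t)]
  have h0 : uCenter A t t = 0 := by simp [uCenter]
  rw [h0, zero_add]
  have hcongr : ∀ u ∈ Finset.univ.erase t, uCenter A u t =
      A u t - (∑ v, A u v) / ((n : ℝ) - 2) - (∑ u, A u t) / ((n : ℝ) - 2)
        + (∑ u, ∑ v, A u v) / (((n : ℝ) - 1) * ((n : ℝ) - 2)) := by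
    intro u hu
    simp [uCenter, Finset.ne_of_mem_erase hu]
  rw [Finset.sum_congr rfl hcongr]
  simp only [Finset.sum_add_distrib, Finset.sum_sub_distrib, ← Finset.sum_div]
  rw [Finset.sum_erase_eq_sub (Finset.mem_univ t), hdiag t, sub_zero]
  rw [show (∑ u ∈ Finset.univ.erase t, ∑ v, A u v)
      = (∑ u, ∑ v, A u v) - ∑ v, A t v from
    Finset.sum_erase_eq_sub (Finset.mem_univ t)]
  simp only [Finset.sum_const, Finset.card_erase_of_mem (Finset.mem_univ t),
    Finset.card_univ, Fintype.card_fin, nsmul_eq_mul]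
  have hcard : ((n - 1 : ℕ) : ℝ) = (n:ℝ) - 1 := by
    rw [Nat.cast_sub (by omega)]; simp
  rw [hcard]
  have hRC : ∑ u, A u t = ∑ v, A t v :=
    Finset.sum_congr rfl fun u _ => hsym u t
  rw [hRC]
  field_simp
  ring

/-- Let `n ≥ 3` and let `A` be a symmetric `n × n` real matrix with zero
diagonal. Then every row sum and every column sum of its `𝒰`-centered version vanishes. -/
theorem uCenter_row_col_sums_eq_zero (n : ℕ) (hn : 3 ≤ n)
    (A : Matrix (Fin n) (Fin n) ℝ) (hsymm : Aᵀ = A) (hdiag : ∀ s, A s s = 0) :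
    (∀ t, ∑ u, uCenter A u t = 0) ∧ (∀ s, ∑ v, uCenter A s v = 0) := by
  have hsym : ∀ u v, A u v = A v u := fun u v => congrFun (congrFun hsymm v) u
  refine ⟨fun t => uCenter_col_sum_aux n hn A hsym hdiag t, fun s => ?_⟩
  have hswap : ∀ v, uCenter A s v = uCenter A v s := by
    intro v
    by_cases h : s = v
    · subst h; rfl
    · simp only [uCenter, if_neg h, if_neg (Ne.symm h)]
      rw [hsym s v, Finset.sum_congr rfl fun u _ => hsym s u,
        Finset.sum_congr rfl fun u _ => hsym u v]
      ring
  rw [Finset.sum_congr rfl fun v _ => hswap v]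
  exact uCenter_col_sum_aux n hn A hsym hdiag s
end

section
/- Let n ≥ 4 be an integer and let A = (a_{st}) and B = (b_{st}) be symmetric n×n real matrices with zero diagonals. Then (Ã·B̃) = (1/C(n,2))·(1/2!)·Σ_{(s,t)∈i₂ⁿ} a_{st}·b_{st} + (1/C(n,4))·(1/4!)·Σ_{(s,t,u,v)∈i₄ⁿ} a_{st}·b_{uv} − (2/C(n,3))·(1/3!)·Σ_{(s,t,u)∈i₃ⁿ} a_{st}·b_{su}, where i_mⁿ denotes the set of all m-tuples of pairwise distinct indices drawn from {1,…,n} and C(n,m) is the binomial coefficient. -/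
open Finset Matrix

/-- The inner product of the `𝒰`-centered versions of two `n × n` matrices:
`(Ã·B̃) := (1/(n(n−3)))·Σ_{s≠t} ã_{st}·b̃_{st}`. -/
noncomputable def uInner {n : ℕ} (A B : Matrix (Fin n) (Fin n) ℝ) : ℝ :=
  (∑ s, ∑ t, if s ≠ t then uCenter A s t * uCenter B s t else 0)
    / ((n : ℝ) * ((n : ℝ) - 3))

/-! Since `Ã` has zero row and column sums (for `A` symmetric with zero diagonal), the
centring of `B` drops out of `Σ ã_{st} b̃_{st}`, and expanding `Σ ã_{st} b_{st}` gives
`S₁ − 2 S₂ / (n − 2) + T_A T_B / ((n − 1)(n − 2))`, where `S₁ = Σ a_{st} b_{st}`,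
`S₂ = Σ_s (Σ_t a_{st}) (Σ_u b_{su})` and `T_A`, `T_B` are the total sums. Inclusion–exclusion over
coinciding indices expresses the three `U`-statistics in the same quantities: the pair sum is `S₁`,
the triple sum `S₂ − S₁` and the quadruple sum `T_A T_B − 4 S₂ + 2 S₁`. -/

lemma Matrix.IsSymm.sum_col_eq_sum_row {ι α : Type*} [Fintype ι] [AddCommMonoid α]
    {A : Matrix ι ι α} (hA : A.IsSymm) (t : ι) : ∑ s, A s t = ∑ s, A t s :=
  sum_congr rfl fun s _ => hA.apply t s

section DistinctIndices

variable {ι R : Type*} [DecidableEq ι] [CommRing R]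

lemma ite_distinct3_eq {s t u : ι} {x : R} (hx : s = t ∨ s = u → x = 0) :
    (if s ≠ t ∧ s ≠ u ∧ t ≠ u then x else 0) = x - if t = u then x else 0 := by
  grind

lemma ite_distinct4_eq {s t u v : ι} {x : R} (hx : s = t ∨ u = v → x = 0) :
    (if s ≠ t ∧ s ≠ u ∧ s ≠ v ∧ t ≠ u ∧ t ≠ v ∧ u ≠ v then x else 0) =
      x - (if s = u then x else 0) - (if s = v then x else 0) - (if t = u then x else 0)
        - (if t = v then x else 0) + (if s = u ∧ t = v then x else 0)
        + (if s = v ∧ t = u then x else 0) := by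
  grind

variable [Fintype ι] {A B : Matrix ι ι R}

lemma sum_ite_ne_mul_of_diag_eq_zero (hA : ∀ s, A s s = 0) :
    (∑ s, ∑ t, if s ≠ t then A s t * B s t else 0) = ∑ s, ∑ t, A s t * B s t := by
  refine sum_congr rfl fun s _ => sum_congr rfl fun t _ => ?_
  grind

lemma sum_ite_distinct3_mul (hA : ∀ s, A s s = 0) (hB : ∀ s, B s s = 0) :
    (∑ s, ∑ t, ∑ u, if s ≠ t ∧ s ≠ u ∧ t ≠ u then A s t * B s u else 0) =
      ∑ s, (∑ t, A s t) * (∑ u, B s u) - ∑ s, ∑ t, A s t * B s t := by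
  have hx : ∀ s t u, s = t ∨ s = u → A s t * B s u = 0 := by
    rintro s t u (rfl | rfl) <;> simp [hA, hB]
  simp only [ite_distinct3_eq (hx _ _ _), sum_sub_distrib, sum_ite_eq, mem_univ, if_true,
    sum_mul_sum]

lemma sum_ite_distinct4_mul (hA : A.IsSymm) (hB : B.IsSymm) (hA0 : ∀ s, A s s = 0)
    (hB0 : ∀ s, B s s = 0) :
    (∑ s, ∑ t, ∑ u, ∑ v,
        if s ≠ t ∧ s ≠ u ∧ s ≠ v ∧ t ≠ u ∧ t ≠ v ∧ u ≠ v then A s t * B u v else 0) =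
      (∑ s, ∑ t, A s t) * (∑ s, ∑ t, B s t) - 4 * ∑ s, (∑ t, A s t) * (∑ u, B s u)
        + 2 * ∑ s, ∑ t, A s t * B s t := by
  have hx : ∀ s t u v, s = t ∨ u = v → A s t * B u v = 0 := by
    rintro s t u v (rfl | rfl) <;> simp [hA0, hB0]
  simp only [ite_distinct4_eq (hx _ _ _ _), sum_add_distrib, sum_sub_distrib, ite_and,
    sum_ite_irrel, sum_ite_eq, mem_univ, if_true, sum_const_zero]
  have h_all : ∑ s, ∑ t, ∑ u, ∑ v, A s t * B u v = (∑ s, ∑ t, A s t) * (∑ s, ∑ t, B s t) := by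
    simp_rw [sum_mul, mul_sum]
  have h_su : ∑ s, ∑ t, ∑ v, A s t * B s v = ∑ s, (∑ t, A s t) * (∑ u, B s u) := by
    simp only [sum_mul_sum]
  have h_sv : ∑ s, ∑ t, ∑ u, A s t * B u s = ∑ s, (∑ t, A s t) * (∑ u, B s u) := by
    simp only [← sum_mul_sum, hB.sum_col_eq_sum_row]
  have h_tu : ∑ s, ∑ t, ∑ v, A s t * B t v = ∑ s, (∑ t, A s t) * (∑ u, B s u) := by
    rw [sum_comm]; simp only [← sum_mul, ← mul_sum, hA.sum_col_eq_sum_row]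
  have h_tv : ∑ s, ∑ t, ∑ u, A s t * B u t = ∑ s, (∑ t, A s t) * (∑ u, B s u) := by
    rw [sum_comm]; simp only [← sum_mul, ← mul_sum, hA.sum_col_eq_sum_row, hB.sum_col_eq_sum_row]
  have h_sv_tu : ∑ s, ∑ t, A s t * B t s = ∑ s, ∑ t, A s t * B s t := by
    simp only [hB.apply]
  rw [h_all, h_su, h_sv, h_tu, h_tv, h_sv_tu]
  ring

end DistinctIndices

section UCenter

variable {n : ℕ}

@[simp]
lemma uCenter_apply_self (A : Matrix (Fin n) (Fin n) ℝ) (s : Fin n) : uCenter A s s = 0 :=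
  if_pos rfl

lemma uCenter_apply_of_ne {A : Matrix (Fin n) (Fin n) ℝ} {s t : Fin n} (h : s ≠ t) :
    uCenter A s t = A s t - (∑ v, A s v) / ((n : ℝ) - 2) - (∑ u, A u t) / ((n : ℝ) - 2)
      + (∑ u, ∑ v, A u v) / (((n : ℝ) - 1) * ((n : ℝ) - 2)) :=
  if_neg h

lemma uCenter_transpose (A : Matrix (Fin n) (Fin n) ℝ) : (uCenter A)ᵀ = uCenter Aᵀ := by
  ext s t
  simp only [transpose_apply, uCenter, eq_comm (a := t), sum_comm (f := fun u v => A u v)]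
  ring_nf

lemma isSymm_uCenter {A : Matrix (Fin n) (Fin n) ℝ} (hA : A.IsSymm) : (uCenter A).IsSymm := by
  rw [IsSymm, uCenter_transpose, hA.eq]

lemma sum_uCenter_row_eq_zero (hn : 3 ≤ n) {A : Matrix (Fin n) (Fin n) ℝ} (hA : A.IsSymm)
    (hA0 : ∀ s, A s s = 0) (s : Fin n) : ∑ t, uCenter A s t = 0 := by
  have hn1 : (n : ℝ) - 1 ≠ 0 := by
    rw [sub_ne_zero]; exact_mod_cast (by omega : n ≠ 1)
  have hn2 : (n : ℝ) - 2 ≠ 0 := by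
    rw [sub_ne_zero]; exact_mod_cast (by omega : n ≠ 2)
  rw [← add_sum_erase _ _ (mem_univ s), uCenter_apply_self, zero_add,
    sum_congr rfl fun t ht => uCenter_apply_of_ne (ne_of_mem_erase ht).symm,
    sum_erase_eq_sub (mem_univ s)]
  simp only [sum_add_distrib, sum_sub_distrib, ← sum_div, hA.sum_col_eq_sum_row, sum_const,
    card_univ, Fintype.card_fin, nsmul_eq_mul, hA0]
  field_simp
  ring

lemma sum_mul_uCenter (P B : Matrix (Fin n) (Fin n) ℝ) (hP : ∀ s, P s s = 0) :
    ∑ s, ∑ t, P s t * uCenter B s t =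
      ∑ s, ∑ t, P s t * B s t
        - (∑ s, (∑ t, P s t) * ∑ v, B s v) / ((n : ℝ) - 2)
        - (∑ t, (∑ s, P s t) * ∑ u, B u t) / ((n : ℝ) - 2)
        + (∑ s, ∑ t, P s t) * (∑ u, ∑ v, B u v) / (((n : ℝ) - 1) * ((n : ℝ) - 2)) := by
  have h : ∀ s t, P s t * uCenter B s t = P s t * B s t - P s t * (∑ v, B s v) / ((n : ℝ) - 2)
      - P s t * (∑ u, B u t) / ((n : ℝ) - 2)
      + P s t * (∑ u, ∑ v, B u v) / (((n : ℝ) - 1) * ((n : ℝ) - 2)) := by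
    intro s t
    obtain rfl | hst := eq_or_ne s t
    · simp [hP]
    · rw [uCenter_apply_of_ne hst]
      ring
  simp only [h, sum_add_distrib, sum_sub_distrib, ← sum_div, ← sum_mul]
  rw [sum_comm (f := fun s t => P s t * ∑ u, B u t)]
  simp only [← sum_mul]

lemma sum_uCenter_mul_uCenter (hn : 3 ≤ n) {A B : Matrix (Fin n) (Fin n) ℝ} (hA : A.IsSymm)
    (hB : B.IsSymm) (hA0 : ∀ s, A s s = 0) (hB0 : ∀ s, B s s = 0) :
    ∑ s, ∑ t, uCenter A s t * uCenter B s t =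
      ∑ s, ∑ t, A s t * B s t - 2 * (∑ s, (∑ t, A s t) * ∑ u, B s u) / ((n : ℝ) - 2)
        + (∑ s, ∑ t, A s t) * (∑ s, ∑ t, B s t) / (((n : ℝ) - 1) * ((n : ℝ) - 2)) := by
  have hrow := sum_uCenter_row_eq_zero hn hA hA0
  have hcol : ∀ t, ∑ s, uCenter A s t = 0 := fun t =>
    ((isSymm_uCenter hA).sum_col_eq_sum_row t).trans (hrow t)
  calc ∑ s, ∑ t, uCenter A s t * uCenter B s t = ∑ s, ∑ t, uCenter A s t * B s t := by
        rw [sum_mul_uCenter _ _ (uCenter_apply_self A)]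
        simp only [hrow, hcol, zero_mul, sum_const_zero, zero_div, sub_zero, add_zero]
    _ = ∑ s, ∑ t, B s t * uCenter A s t := by simp only [mul_comm (uCenter A _ _)]
    _ = _ := by
        rw [sum_mul_uCenter _ _ hB0]
        simp only [hA.sum_col_eq_sum_row, hB.sum_col_eq_sum_row, mul_comm (B _ _),
          mul_comm (∑ t, B _ t)]
        ring

end UCenter

/-- For `n ≥ 4` and symmetric `n × n` matrices `A`, `B` with zero
diagonals, the inner product `(Ã·B̃)` equals the `𝒰`-statistic combination
`(1/C(n,2))·(1/2!)·Σ_{(s,t)∈i₂ⁿ} a_{st} b_{st} + (1/C(n,4))·(1/4!)·Σ_{(s,t,u,v)∈i₄ⁿ} a_{st} b_{uv}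
 − (2/C(n,3))·(1/3!)·Σ_{(s,t,u)∈i₃ⁿ} a_{st} b_{su}`, where `i_mⁿ` is the set of `m`-tuples
of pairwise distinct indices. -/
theorem uInner_eq_uStatistic (n : ℕ) (hn : 4 ≤ n)
    (A B : Matrix (Fin n) (Fin n) ℝ) (hsymmA : Aᵀ = A) (hsymmB : Bᵀ = B)
    (hdiagA : ∀ s, A s s = 0) (hdiagB : ∀ s, B s s = 0) :
    uInner A B =
      (1 / (n.choose 2 : ℝ)) * (1 / (Nat.factorial 2 : ℝ)) *
        (∑ s, ∑ t, if s ≠ t then A s t * B s t else 0)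
      + (1 / (n.choose 4 : ℝ)) * (1 / (Nat.factorial 4 : ℝ)) *
        (∑ s, ∑ t, ∑ u, ∑ v,
          if s ≠ t ∧ s ≠ u ∧ s ≠ v ∧ t ≠ u ∧ t ≠ v ∧ u ≠ v then A s t * B u v else 0)
      - (2 / (n.choose 3 : ℝ)) * (1 / (Nat.factorial 3 : ℝ)) *
        (∑ s, ∑ t, ∑ u, if s ≠ t ∧ s ≠ u ∧ t ≠ u then A s t * B s u else 0) := by
  have hn' : (4 : ℝ) ≤ n := by exact_mod_cast hn
  have h0 : (n : ℝ) ≠ 0 := by linarith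
  have h1 : (n : ℝ) - 1 ≠ 0 := by linarith
  have h2 : (n : ℝ) - 2 ≠ 0 := by linarith
  have h3 : (n : ℝ) - 3 ≠ 0 := by linarith
  rw [uInner, sum_ite_ne_mul_of_diag_eq_zero (uCenter_apply_self A),
    sum_uCenter_mul_uCenter (by omega) hsymmA hsymmB hdiagA hdiagB,
    sum_ite_ne_mul_of_diag_eq_zero hdiagA, sum_ite_distinct3_mul hdiagA hdiagB,
    sum_ite_distinct4_mul hsymmA hsymmB hdiagA hdiagB]
  simp only [Nat.cast_choose_eq_descPochhammer_div, descPochhammer_succ_eval, descPochhammer_zero,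
    Polynomial.eval_one]
  norm_num [Nat.factorial]
  field_simp
  ring
end

section
/- Let n ≥ 4 and let (x₁,y₁),…,(x_n,y_n) be independent identically distributed pairs of real-valued random variables with E[x₁²] < ∞ and E[y₁²] < ∞. Then the fourth-order U-statistic cov_n² is an unbiased estimator of the squared covariance: E[cov_n²((x₁,…,x_n),(y₁,…,y_n))] = Cov(x₁,y₁)². -/
/-! For `s ≠ t` the block `(x_s - x_t)(y_s - y_t)` has mean `2 Cov(x, y)`, because `x_s` and `y_t`
are independent. Each summand of `h(s,t,u,v)` is `1/4` times the product of two such blocks on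
disjoint pairs of indices, which are independent, so it has mean `Cov(x, y)²`. Hence so do `h`
and its average `cov_n²` over the `C(n,4)` increasing quadruples, which are counted as the
order embeddings `Fin 4 ↪o Fin n`. -/

open Finset MeasureTheory ProbabilityTheory

/-- The symmetrized kernel `h` of the fourth-order `𝒰`-statistic `cov_n²`: the average over
all `4!` permutations `(s′,t′,u′,v′)` of `(s,t,u,v)` of
`(1/4)·(x_{s′}−x_{t′})(y_{s′}−y_{t′})(x_{u′}−x_{v′})(y_{u′}−y_{v′})`. -/
noncomputable def hKernel {n : ℕ} (x y : Fin n → ℝ) (s t u v : Fin n) : ℝ :=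
  (1 / (Nat.factorial 4 : ℝ)) * ∑ σ : Equiv.Perm (Fin 4),
    (1 / 4 : ℝ) * (x (![s, t, u, v] (σ 0)) - x (![s, t, u, v] (σ 1)))
      * (y (![s, t, u, v] (σ 0)) - y (![s, t, u, v] (σ 1)))
      * (x (![s, t, u, v] (σ 2)) - x (![s, t, u, v] (σ 3)))
      * (y (![s, t, u, v] (σ 2)) - y (![s, t, u, v] (σ 3)))

/-- The fourth-order `𝒰`-statistic `cov_n²(x,y) = (1/C(n,4))·Σ_{s<t<u<v} h(s,t,u,v)`. -/
noncomputable def covnSq {n : ℕ} (x y : Fin n → ℝ) : ℝ :=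
  (∑ s, ∑ t, ∑ u, ∑ v,
    if s < t ∧ t < u ∧ u < v then hKernel x y s t u v else 0) / (n.choose 4 : ℝ)

section StrictlyIncreasingQuadruples

variable {α : Type*} [LinearOrder α]

lemma strictMono_vecCons_four {a b c d : α} (hab : a < b) (hbc : b < c) (hcd : c < d) :
    StrictMono ![a, b, c, d] := by
  rw [Fin.strictMono_iff_lt_succ]
  intro i
  fin_cases i <;> assumption

def strictlyIncreasingQuadrupleEquiv :
    {q : α × α × α × α // q.1 < q.2.1 ∧ q.2.1 < q.2.2.1 ∧ q.2.2.1 < q.2.2.2} ≃ (Fin 4 ↪o α) where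
  toFun q := OrderEmbedding.ofStrictMono _ (strictMono_vecCons_four q.2.1 q.2.2.1 q.2.2.2)
  invFun f := ⟨(f 0, f 1, f 2, f 3),
    f.strictMono (by decide), f.strictMono (by decide), f.strictMono (by decide)⟩
  left_inv _ := rfl
  right_inv f := by ext i; fin_cases i <;> rfl

lemma sum_ite_lt_lt_lt_eq_sum_orderEmbedding [Fintype α] {M : Type*} [AddCommMonoid M]
    (g : α → α → α → α → M) :
    ∑ s, ∑ t, ∑ u, ∑ v, (if s < t ∧ t < u ∧ u < v then g s t u v else 0) =
      ∑ f : Fin 4 ↪o α, g (f 0) (f 1) (f 2) (f 3) := by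
  let g' (q : α × α × α × α) := g q.1 q.2.1 q.2.2.1 q.2.2.2
  rw [← Fintype.sum_equiv strictlyIncreasingQuadrupleEquiv (fun q => g' q) _ fun _ => rfl,
    ← Finset.sum_subtype _ (fun _ => Finset.mem_filter_univ _) g', Finset.sum_filter]
  simp only [Fintype.sum_prod_type, g']

lemma card_orderEmbedding_fin (k n : ℕ) : Fintype.card (Fin k ↪o Fin n) = n.choose k := by
  rw [← Nat.card_eq_fintype_card, Nat.card_congr Set.powersetCard.ofFinEmbEquiv,
    Set.powersetCard.card, Nat.card_eq_fintype_card, Fintype.card_fin]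

end StrictlyIncreasingQuadruples

lemma hKernel_summand_eq_quarter_mul {Ω ι : Type*} (x y : ι → Ω → ℝ) (w : Fin 4 → ι) :
    (fun ω => 1 / 4 * (x (w 0) ω - x (w 1) ω) * (y (w 0) ω - y (w 1) ω)
      * (x (w 2) ω - x (w 3) ω) * (y (w 2) ω - y (w 3) ω)) =
    fun ω => 1 / 4 * ((x (w 0) ω - x (w 1) ω) * (y (w 0) ω - y (w 1) ω)
      * ((x (w 2) ω - x (w 3) ω) * (y (w 2) ω - y (w 3) ω))) := by
  ext; ring

section Covariance

variable {Ω Ω' : Type*} [MeasurableSpace Ω] [MeasurableSpace Ω'] {μ : Measure Ω} {ν : Measure Ω'}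

lemma ProbabilityTheory.IdentDistrib.covariance_eq {X Y : Ω → ℝ} {X' Y' : Ω' → ℝ}
    (h : IdentDistrib (fun ω => (X ω, Y ω)) (fun ω => (X' ω, Y' ω)) μ ν) :
    cov[X, Y; μ] = cov[X', Y'; ν] := by
  have hX : μ[X] = ν[X'] := (h.comp measurable_fst).integral_eq
  have hY : μ[Y] = ν[Y'] := (h.comp measurable_snd).integral_eq
  rw [covariance, covariance, hX, hY]
  exact (h.comp (u := fun p : ℝ × ℝ => (p.1 - ν[X']) * (p.2 - ν[Y'])) (by fun_prop)).integral_eq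

lemma integrable_sub_mul_sub {X X' Y Y' : Ω → ℝ} (hX : MemLp X 2 μ) (hX' : MemLp X' 2 μ)
    (hY : MemLp Y 2 μ) (hY' : MemLp Y' 2 μ) :
    Integrable (fun ω => (X ω - X' ω) * (Y ω - Y' ω)) μ :=
  (hX.sub hX').integrable_mul (hY.sub hY')

lemma integral_sub_mul_sub_eq_two_mul_covariance [IsProbabilityMeasure μ] {X Y X' Y' : Ω → ℝ}
    (hX : MemLp X 2 μ) (hY : MemLp Y 2 μ)
    (hind : IndepFun (fun ω => (X ω, Y ω)) (fun ω => (X' ω, Y' ω)) μ)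
    (hid : IdentDistrib (fun ω => (X ω, Y ω)) (fun ω => (X' ω, Y' ω)) μ μ) :
    ∫ ω, (X ω - X' ω) * (Y ω - Y' ω) ∂μ = 2 * cov[X, Y; μ] := by
  have hX' : MemLp X' 2 μ := (hid.comp measurable_fst).memLp_snd hX
  have hY' : MemLp Y' 2 μ := (hid.comp measurable_snd).memLp_snd hY
  have hXY' : ∫ ω, X ω * Y' ω ∂μ = μ[X] * μ[Y'] :=
    (hind.comp measurable_fst measurable_snd).integral_fun_mul_eq_mul_integral
      hX.aestronglyMeasurable hY'.aestronglyMeasurable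
  have hX'Y : ∫ ω, X' ω * Y ω ∂μ = μ[X'] * μ[Y] :=
    (hind.symm.comp measurable_fst measurable_snd).integral_fun_mul_eq_mul_integral
      hX'.aestronglyMeasurable hY.aestronglyMeasurable
  have hX'Y' : ∫ ω, X' ω * Y' ω ∂μ = ∫ ω, X ω * Y ω ∂μ :=
    (hid.comp (u := fun p : ℝ × ℝ => p.1 * p.2) (by fun_prop)).integral_eq.symm
  have hmX : μ[X'] = μ[X] := (hid.comp measurable_fst).integral_eq.symm
  have hmY : μ[Y'] = μ[Y] := (hid.comp measurable_snd).integral_eq.symm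
  have hexpand : (fun ω => (X ω - X' ω) * (Y ω - Y' ω)) =
      fun ω => (X ω * Y ω + X' ω * Y' ω) - (X ω * Y' ω + X' ω * Y ω) := by
    ext ω; ring
  have hXY_int : Integrable (fun ω => X ω * Y ω) μ := hX.integrable_mul hY
  have hX'Y'_int : Integrable (fun ω => X' ω * Y' ω) μ := hX'.integrable_mul hY'
  have hXY'_int : Integrable (fun ω => X ω * Y' ω) μ := hX.integrable_mul hY'
  have hX'Y_int : Integrable (fun ω => X' ω * Y ω) μ := hX'.integrable_mul hY
  rw [hexpand, integral_sub, integral_add hXY_int hX'Y'_int, integral_add hXY'_int hX'Y_int,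
    hXY', hX'Y, hX'Y', hmX, hmY, covariance_eq_sub hX hY]
  · simp only [Pi.mul_apply]
    ring
  · exact hXY_int.add hX'Y'_int
  · exact hXY'_int.add hX'Y_int

section IIDPairs

variable {ι : Type*} {x y : ι → Ω → ℝ}

lemma indepFun_sub_mul_sub (hmeas : ∀ s, Measurable fun ω => (x s ω, y s ω))
    (hindep : iIndepFun (fun s ω => (x s ω, y s ω)) μ) {a b c d : ι}
    (hac : a ≠ c) (had : a ≠ d) (hbc : b ≠ c) (hbd : b ≠ d) :
    IndepFun (fun ω => (x a ω - x b ω) * (y a ω - y b ω))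
      (fun ω => (x c ω - x d ω) * (y c ω - y d ω)) μ := by
  have hφ : Measurable fun q : (ℝ × ℝ) × ℝ × ℝ => (q.1.1 - q.2.1) * (q.1.2 - q.2.2) := by
    fun_prop
  exact (hindep.indepFun_prodMk_prodMk hmeas a b c d hac had hbc hbd).comp hφ hφ

lemma integrable_hKernel_summand [IsProbabilityMeasure μ]
    (hmeas : ∀ s, Measurable fun ω => (x s ω, y s ω))
    (hindep : iIndepFun (fun s ω => (x s ω, y s ω)) μ)
    (hx : ∀ s, MemLp (x s) 2 μ) (hy : ∀ s, MemLp (y s) 2 μ) {w : Fin 4 → ι}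
    (hw : Function.Injective w) :
    Integrable (fun ω => 1 / 4 * (x (w 0) ω - x (w 1) ω) * (y (w 0) ω - y (w 1) ω)
      * (x (w 2) ω - x (w 3) ω) * (y (w 2) ω - y (w 3) ω)) μ := by
  rw [hKernel_summand_eq_quarter_mul]
  exact ((indepFun_sub_mul_sub hmeas hindep (hw.ne (by decide)) (hw.ne (by decide))
    (hw.ne (by decide)) (hw.ne (by decide))).integrable_mul
    (integrable_sub_mul_sub (hx _) (hx _) (hy _) (hy _))
    (integrable_sub_mul_sub (hx _) (hx _) (hy _) (hy _))).const_mul _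

lemma integral_hKernel_summand [IsProbabilityMeasure μ]
    (hmeas : ∀ s, Measurable fun ω => (x s ω, y s ω))
    (hindep : iIndepFun (fun s ω => (x s ω, y s ω)) μ)
    (hident : ∀ s t, IdentDistrib (fun ω => (x s ω, y s ω)) (fun ω => (x t ω, y t ω)) μ μ)
    (hx : ∀ s, MemLp (x s) 2 μ) (hy : ∀ s, MemLp (y s) 2 μ) {w : Fin 4 → ι}
    (hw : Function.Injective w) :
    ∫ ω, 1 / 4 * (x (w 0) ω - x (w 1) ω) * (y (w 0) ω - y (w 1) ω)
      * (x (w 2) ω - x (w 3) ω) * (y (w 2) ω - y (w 3) ω) ∂μ =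
      cov[x (w 0), y (w 0); μ] * cov[x (w 2), y (w 2); μ] := by
  have hpair {s t : ι} (hst : s ≠ t) :
      ∫ ω, (x s ω - x t ω) * (y s ω - y t ω) ∂μ = 2 * cov[x s, y s; μ] :=
    integral_sub_mul_sub_eq_two_mul_covariance (hx _) (hy _) (hindep.indepFun hst) (hident _ _)
  rw [hKernel_summand_eq_quarter_mul, integral_const_mul, (indepFun_sub_mul_sub hmeas hindep
    (hw.ne (by decide)) (hw.ne (by decide)) (hw.ne (by decide)) (hw.ne (by decide)))
    |>.integral_fun_mul_eq_mul_integral, hpair (hw.ne (by decide)), hpair (hw.ne (by decide))]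
  · ring
  · exact (integrable_sub_mul_sub (hx _) (hx _) (hy _) (hy _)).aestronglyMeasurable
  · exact (integrable_sub_mul_sub (hx _) (hx _) (hy _) (hy _)).aestronglyMeasurable

lemma integrable_hKernel [IsProbabilityMeasure μ] {n : ℕ} {x y : Fin n → Ω → ℝ}
    (hmeas : ∀ s, Measurable fun ω => (x s ω, y s ω))
    (hindep : iIndepFun (fun s ω => (x s ω, y s ω)) μ)
    (hx : ∀ s, MemLp (x s) 2 μ) (hy : ∀ s, MemLp (y s) 2 μ) {s t u v : Fin n}
    (hw : Function.Injective ![s, t, u, v]) :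
    Integrable (fun ω => hKernel (fun i => x i ω) (fun i => y i ω) s t u v) μ :=
  (integrable_finsetSum _ fun σ _ =>
    integrable_hKernel_summand hmeas hindep hx hy (hw.comp σ.injective)).const_mul _

lemma integral_hKernel [IsProbabilityMeasure μ] {n : ℕ} {x y : Fin n → Ω → ℝ}
    (hmeas : ∀ s, Measurable fun ω => (x s ω, y s ω))
    (hindep : iIndepFun (fun s ω => (x s ω, y s ω)) μ)
    (hident : ∀ s t, IdentDistrib (fun ω => (x s ω, y s ω)) (fun ω => (x t ω, y t ω)) μ μ)
    (hx : ∀ s, MemLp (x s) 2 μ) (hy : ∀ s, MemLp (y s) 2 μ) {s t u v : Fin n}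
    (hw : Function.Injective ![s, t, u, v]) (i : Fin n) :
    ∫ ω, hKernel (fun i => x i ω) (fun i => y i ω) s t u v ∂μ = cov[x i, y i; μ] ^ 2 := by
  have hcov (s : Fin n) : cov[x s, y s; μ] = cov[x i, y i; μ] := (hident s i).covariance_eq
  have hint (σ : Equiv.Perm (Fin 4)) :=
    integrable_hKernel_summand hmeas hindep hx hy (hw.comp σ.injective)
  have hsummand (σ : Equiv.Perm (Fin 4)) :=
    integral_hKernel_summand hmeas hindep hident hx hy (hw.comp σ.injective)
  simp only [Function.comp_apply] at hint hsummand
  unfold hKernel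
  rw [integral_const_mul, integral_finsetSum _ fun σ _ => hint σ,
    Finset.sum_congr rfl fun σ _ => (hsummand σ).trans (by rw [hcov, hcov (![s, t, u, v] (σ 2))]),
    Finset.sum_const, Finset.card_univ, Fintype.card_perm, Fintype.card_fin, nsmul_eq_mul]
  field_simp

end IIDPairs

end Covariance

lemma integral_covnSq_eq_covariance_sq {Ω : Type*} [MeasurableSpace Ω] {μ : Measure Ω}
    [IsProbabilityMeasure μ] {n : ℕ} (hn : 4 ≤ n) {x y : Fin n → Ω → ℝ}
    (hmeas : ∀ s, Measurable fun ω => (x s ω, y s ω))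
    (hindep : iIndepFun (fun s ω => (x s ω, y s ω)) μ)
    (hident : ∀ s t, IdentDistrib (fun ω => (x s ω, y s ω)) (fun ω => (x t ω, y t ω)) μ μ)
    (hx : ∀ s, MemLp (x s) 2 μ) (hy : ∀ s, MemLp (y s) 2 μ) (i : Fin n) :
    ∫ ω, covnSq (fun s => x s ω) (fun s => y s ω) ∂μ = cov[x i, y i; μ] ^ 2 := by
  have hw (f : Fin 4 ↪o Fin n) : Function.Injective ![f 0, f 1, f 2, f 3] :=
    (strictMono_vecCons_four (f.strictMono (by decide)) (f.strictMono (by decide))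
      (f.strictMono (by decide))).injective
  have hchoose : (n.choose 4 : ℝ) ≠ 0 := Nat.cast_ne_zero.mpr (Nat.choose_pos hn).ne'
  simp only [covnSq, sum_ite_lt_lt_lt_eq_sum_orderEmbedding]
  rw [integral_div, integral_finsetSum _ fun f _ => integrable_hKernel hmeas hindep hx hy (hw f),
    Finset.sum_congr rfl fun f _ => integral_hKernel hmeas hindep hident hx hy (hw f) i,
    Finset.sum_const, Finset.card_univ, card_orderEmbedding_fin, nsmul_eq_mul]
  field_simp

/-- For `n ≥ 4` and i.i.d. pairs `(x_s, y_s)` of square-integrable real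
random variables, the fourth-order `𝒰`-statistic `cov_n²` is an unbiased estimator of the
squared covariance: `E[cov_n²] = Cov(x₁,y₁)²`. -/
theorem integral_covnSq_eq_cov_sq
    {Ω : Type*} [MeasurableSpace Ω] (μ : Measure Ω) [IsProbabilityMeasure μ]
    (n : ℕ) (hn : 4 ≤ n) (x y : Fin n → Ω → ℝ)
    (hmeas : ∀ s, Measurable (fun ω => (x s ω, y s ω)))
    (hindep : iIndepFun (m := fun _ : Fin n => (inferInstance : MeasurableSpace (ℝ × ℝ)))
      (fun s ω => (x s ω, y s ω)) μ)
    (hident : ∀ s, Measure.map (fun ω => (x s ω, y s ω)) μ =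
      Measure.map (fun ω => (x ⟨0, by omega⟩ ω, y ⟨0, by omega⟩ ω)) μ)
    (hx2 : Integrable (fun ω => (x ⟨0, by omega⟩ ω) ^ 2) μ)
    (hy2 : Integrable (fun ω => (y ⟨0, by omega⟩ ω) ^ 2) μ) :
    ∫ ω, covnSq (fun s => x s ω) (fun s => y s ω) ∂μ =
      (∫ ω, x ⟨0, by omega⟩ ω * y ⟨0, by omega⟩ ω ∂μ
        - (∫ ω, x ⟨0, by omega⟩ ω ∂μ) * ∫ ω, y ⟨0, by omega⟩ ω ∂μ) ^ 2 := by
  set i₀ : Fin n := ⟨0, by omega⟩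
  have hident₀ (s : Fin n) :
      IdentDistrib (fun ω => (x s ω, y s ω)) (fun ω => (x i₀ ω, y i₀ ω)) μ μ :=
    ⟨(hmeas s).aemeasurable, (hmeas i₀).aemeasurable, hident s⟩
  have hident' (s t : Fin n) := (hident₀ s).trans (hident₀ t).symm
  have hx (s : Fin n) : MemLp (x s) 2 μ := ((hident' i₀ s).comp measurable_fst).memLp_snd <|
    (memLp_two_iff_integrable_sq (measurable_fst.comp (hmeas i₀)).aestronglyMeasurable).2 hx2
  have hy (s : Fin n) : MemLp (y s) 2 μ := ((hident' i₀ s).comp measurable_snd).memLp_snd <|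
    (memLp_two_iff_integrable_sq (measurable_snd.comp (hmeas i₀)).aestronglyMeasurable).2 hy2
  rw [integral_covnSq_eq_covariance_sq hn hmeas hindep hident' hx hy i₀,
    covariance_eq_sub (hx i₀) (hy i₀)]
  rfl
end

section
/- Let S and T be measurable spaces and let (X₁,Y₁), (X₂,Y₂), (X₃,Y₃), (X₄,Y₄) be independent identically distributed random pairs taking values in S×T. Let k : S×S → ℝ and l : T×T → ℝ be measurable with E[k(X₁,X₂)²] < ∞ and E[l(Y₁,Y₂)²] < ∞, and let h_k and h_l be the corresponding doubly centered kernels. Then for any index pairs {s,t} and {u,v} in {1,2,3,4} with s ≠ t, u ≠ v and {s,t} ≠ {u,v}, one has E[h_k(X_s,X_t)·h_l(Y_u,Y_v)] = 0. -/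
/-!
If `{s, t} ≠ {u, v}`, one of `s`, `t`, say `s`, differs from the three other indices, so `X_s`
is independent of `(X_t, Y_u, Y_v)`. Integrating out `X_s` first (Fubini), the expectation becomes
`E[(∫ h_k(x, X_t) dP(x)) · h_l(Y_u, Y_v)]` with `P` the law of `X_s`, and the inner integral
vanishes because a doubly centered kernel has mean zero in each variable.
-/

open MeasureTheory ProbabilityTheory Function

section Centering

variable {α : Type*} [MeasurableSpace α] (ρ : Measure α)

noncomputable def doublyCentered (k : α → α → ℝ) (a b : α) : ℝ :=
  k a b - ∫ x, k a x ∂ρ - ∫ x, k x b ∂ρ + ∫ p, uncurry k p ∂ρ.prod ρ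

variable {ρ}

lemma integral_sub_integral_self [IsZeroOrProbabilityMeasure ρ] (f : α → ℝ) :
    ∫ a, (f a - ∫ x, f x ∂ρ) ∂ρ = 0 := by
  simpa [centralMoment, moment] using centralMoment_one (X := f) (μ := ρ)

lemma doublyCentered_swap [SFinite ρ] (k : α → α → ℝ) (a b : α) :
    doublyCentered ρ (swap k) b a = doublyCentered ρ k a b := by
  simp only [doublyCentered, swap]
  rw [← integral_prod_swap (uncurry k), sub_right_comm]
  rfl

lemma integral_doublyCentered_left [IsProbabilityMeasure ρ] {k : α → α → ℝ}
    (hk : Integrable (uncurry k) (ρ.prod ρ)) (b : α) :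
    ∫ a, doublyCentered ρ k a b ∂ρ = 0 := by
  set g : α → ℝ := fun a => ∫ x, k a x ∂ρ
  have hg : Integrable g ρ := hk.integral_prod_left
  have hsplit : (fun a => doublyCentered ρ k a b)
      = fun a => (k a b - ∫ x, k x b ∂ρ) - (g a - ∫ x, g x ∂ρ) := by
    ext a
    rw [doublyCentered, integral_prod _ hk]
    simp only [g, uncurry_apply_pair]
    ring
  have hg' : Integrable (fun a => g a - ∫ x, g x ∂ρ) ρ := hg.sub (integrable_const _)
  rw [hsplit]
  by_cases hb : Integrable (fun a => k a b) ρ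
  · have hb' : Integrable (fun a => k a b - ∫ x, k x b ∂ρ) ρ := hb.sub (integrable_const _)
    rw [integral_sub hb' hg', integral_sub_integral_self,
      integral_sub_integral_self, sub_zero]
  · refine integral_undef fun h => hb ?_
    refine ((h.add hg').add (integrable_const (∫ x, k x b ∂ρ))).congr (ae_of_all _ fun a => ?_)
    simp only [Pi.add_apply]
    ring

lemma integral_doublyCentered_right [IsProbabilityMeasure ρ] {k : α → α → ℝ}
    (hk : Integrable (uncurry k) (ρ.prod ρ)) (a : α) :
    ∫ b, doublyCentered ρ k a b ∂ρ = 0 := by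
  simp_rw [← doublyCentered_swap k a]
  exact integral_doublyCentered_left (k := swap k) hk.swap a

lemma measurable_doublyCentered [SFinite ρ] {k : α → α → ℝ} (hk : Measurable (uncurry k)) :
    Measurable (uncurry (doublyCentered ρ k)) := by
  have hleft : Measurable fun a => ∫ x, k a x ∂ρ :=
    hk.stronglyMeasurable.integral_prod_right'.measurable
  have hright : Measurable fun b => ∫ x, k x b ∂ρ :=
    (hk.comp measurable_swap).stronglyMeasurable.integral_prod_right'.measurable
  exact ((hk.sub (hleft.comp measurable_fst)).sub (hright.comp measurable_snd)).add
    measurable_const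

end Centering

section Independence

variable {Ω α γ : Type*} [MeasurableSpace Ω] [MeasurableSpace α] [MeasurableSpace γ]
  {μ : Measure Ω}

lemma ProbabilityTheory.IndepFun.integral_comp_eq_zero [IsFiniteMeasure μ] {E : Type*}
    [NormedAddCommGroup E] [NormedSpace ℝ E] {V : Ω → α} {W : Ω → γ} (hVW : IndepFun V W μ)
    (hV : AEMeasurable V μ) (hW : AEMeasurable W μ) {f : α → γ → E}
    (hf : AEStronglyMeasurable (uncurry f) ((μ.map V).prod (μ.map W)))
    (hzero : ∀ w, ∫ v, f v w ∂μ.map V = 0) :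
    ∫ ω, f (V ω) (W ω) ∂μ = 0 := by
  have hmap := (indepFun_iff_map_prod_eq_prod_map_map hV hW).mp hVW
  rw [← hmap] at hf
  have hcomp := integral_map (f := uncurry f) (hV.prodMk hW) hf
  simp only [uncurry_apply_pair] at hcomp
  rw [← hcomp, hmap]
  by_cases hint : Integrable (uncurry f) ((μ.map V).prod (μ.map W))
  · simp [integral_prod_symm _ hint, hzero]
  · exact integral_undef hint

lemma ProbabilityTheory.iIndepFun.indepFun_prodMk₃ {ι β : Type*} [MeasurableSpace β]
    {f : ι → Ω → β} (hf : iIndepFun f μ) (hmeas : ∀ i, Measurable (f i)) {i j k l : ι}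
    (hij : i ≠ j) (hik : i ≠ k) (hil : i ≠ l) :
    IndepFun (f i) (fun ω => (f j ω, f k ω, f l ω)) μ := by
  classical
  have hdisj : Disjoint ({i} : Finset ι) {j, k, l} := by simp [hij, hik, hil]
  have hi : i ∈ ({i} : Finset ι) := Finset.mem_singleton_self i
  have hj : j ∈ ({j, k, l} : Finset ι) := by simp
  have hk : k ∈ ({j, k, l} : Finset ι) := by simp
  have hl : l ∈ ({j, k, l} : Finset ι) := by simp
  exact (hf.indepFun_finset _ _ hdisj hmeas).comp (measurable_pi_apply ⟨i, hi⟩)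
    ((measurable_pi_apply ⟨j, hj⟩).prodMk
      ((measurable_pi_apply ⟨k, hk⟩).prodMk (measurable_pi_apply ⟨l, hl⟩)))

end Independence

section Kernels

variable {Ω α : Type*} [MeasurableSpace Ω] [MeasurableSpace α] {μ : Measure Ω}
  [IsFiniteMeasure μ] {V V' : Ω → α} {k : α → α → ℝ}

lemma ProbabilityTheory.IndepFun.map_prodMk_eq_prod (hVV' : IndepFun V V' μ)
    (hV : AEMeasurable V μ) (hV' : AEMeasurable V' μ) (hlaw : μ.map V' = μ.map V) :
    μ.map (fun ω => (V ω, V' ω)) = (μ.map V).prod (μ.map V) := by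
  rw [(indepFun_iff_map_prod_eq_prod_map_map hV hV').mp hVV', hlaw]

lemma doublyCentered_map_eq (hVV' : IndepFun V V' μ) (hV : AEMeasurable V μ)
    (hV' : AEMeasurable V' μ) (hlaw : μ.map V' = μ.map V) (hk : Measurable (uncurry k))
    (a b : α) :
    doublyCentered (μ.map V) k a b = k a b - ∫ ω, k a (V ω) ∂μ - ∫ ω, k (V ω) b ∂μ
      + ∫ ω, k (V ω) (V' ω) ∂μ := by
  rw [doublyCentered, ← hVV'.map_prodMk_eq_prod hV hV' hlaw,
    integral_map (hV.prodMk hV') hk.aestronglyMeasurable,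
    integral_map (f := fun x => k a x) hV (hk.comp measurable_prodMk_left).aestronglyMeasurable,
    integral_map (f := fun x => k x b) hV (hk.comp measurable_prodMk_right).aestronglyMeasurable]
  rfl

lemma integrable_uncurry_of_integrable_sq (hVV' : IndepFun V V' μ)
    (hV : AEMeasurable V μ) (hV' : AEMeasurable V' μ) (hlaw : μ.map V' = μ.map V)
    (hk : Measurable (uncurry k)) (hk2 : Integrable (fun ω => k (V ω) (V' ω) ^ 2) μ) :
    Integrable (uncurry k) ((μ.map V).prod (μ.map V)) := by
  have hmemLp : MemLp (fun ω => k (V ω) (V' ω)) 2 μ :=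
    (memLp_two_iff_integrable_sq
      (hk.comp_aemeasurable (hV.prodMk hV')).aestronglyMeasurable).mpr hk2
  rw [← hVV'.map_prodMk_eq_prod hV hV' hlaw,
    integrable_map_measure hk.aestronglyMeasurable (hV.prodMk hV')]
  exact hmemLp.integrable one_le_two

end Kernels

section PairProcess

variable {Ω S T ι : Type*} [MeasurableSpace Ω] [MeasurableSpace S] [MeasurableSpace T]
  {μ : Measure Ω} {X : ι → Ω → S} {Y : ι → Ω → T}
  (hmeas : ∀ i, Measurable fun ω => (X i ω, Y i ω))
  (hindep : iIndepFun (fun i ω => (X i ω, Y i ω)) μ)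
  {ν : Measure S} (hlaw : ∀ i, μ.map (X i) = ν)
  {h : S → S → ℝ} {g : T → T → ℝ} (hh : Measurable (uncurry h)) (hg : Measurable (uncurry g))
include hmeas hindep hlaw hh hg

lemma integral_comp_mul_comp_eq_zero {s t u v : ι}
    (hst : s ≠ t) (hsu : s ≠ u) (hsv : s ≠ v) (hcenter : ∀ b, ∫ a, h a b ∂ν = 0) :
    ∫ ω, h (X s ω) (X t ω) * g (Y u ω) (Y v ω) ∂μ = 0 := by
  have := hindep.isProbabilityMeasure
  have hX i : Measurable (X i) := measurable_fst.comp (hmeas i)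
  have hY i : Measurable (Y i) := measurable_snd.comp (hmeas i)
  have hindep' : IndepFun (X s) (fun ω => (X t ω, Y u ω, Y v ω)) μ :=
    (hindep.indepFun_prodMk₃ hmeas hst hsu hsv).comp measurable_fst
      (ψ := fun c : (S × T) × (S × T) × (S × T) => (c.1.1, c.2.1.2, c.2.2.2)) (by fun_prop)
  refine hindep'.integral_comp_eq_zero (f := fun a c => h a c.1 * g c.2.1 c.2.2)
    (hX s).aemeasurable ((hX t).prodMk ((hY u).prodMk (hY v))).aemeasurable ?_ fun c => ?_
  · exact ((hh.comp (measurable_fst.prodMk (measurable_fst.comp measurable_snd))).mul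
      (hg.comp (measurable_snd.comp measurable_snd))).aestronglyMeasurable
  · rw [integral_mul_const, hlaw, hcenter, zero_mul]

lemma integral_mul_eq_zero_of_pair_ne [DecidableEq ι]
    (hleft : ∀ b, ∫ a, h a b ∂ν = 0) (hright : ∀ a, ∫ b, h a b ∂ν = 0) {s t u v : ι}
    (hst : s ≠ t) (hne : ({s, t} : Finset ι) ≠ {u, v}) :
    ∫ ω, h (X s ω) (X t ω) * g (Y u ω) (Y v ω) ∂μ = 0 := by
  have hfree : (s ≠ u ∧ s ≠ v) ∨ (t ≠ u ∧ t ≠ v) := by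
    by_contra! h
    exact hne (by grind)
  rcases hfree with ⟨hsu, hsv⟩ | ⟨htu, htv⟩
  · exact integral_comp_mul_comp_eq_zero hmeas hindep hlaw hh hg hst hsu hsv hleft
  · exact integral_comp_mul_comp_eq_zero (h := swap h) hmeas hindep hlaw
      (hh.comp measurable_swap) hg hst.symm htu htv hright

end PairProcess

theorem doublyCentered_uncorrelated_general
    {Ω S T : Type*} [MeasurableSpace Ω] [MeasurableSpace S] [MeasurableSpace T]
    (μ : Measure Ω)
    (X : Fin 4 → Ω → S) (Y : Fin 4 → Ω → T)
    (hmeas : ∀ s, Measurable (fun ω => (X s ω, Y s ω)))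
    (hindep : iIndepFun
      (fun s ω => (X s ω, Y s ω)) μ)
    (hident : ∀ s, Measure.map (fun ω => (X s ω, Y s ω)) μ =
      Measure.map (fun ω => (X 0 ω, Y 0 ω)) μ)
    (k : S → S → ℝ) (l : T → T → ℝ)
    (hkmeas : Measurable fun p : S × S => k p.1 p.2)
    (hlmeas : Measurable fun p : T × T => l p.1 p.2)
    (hk2 : Integrable (fun ω => (k (X 0 ω) (X 1 ω)) ^ 2) μ)
    (hk : S → S → ℝ) (hlT : T → T → ℝ)
    (hhk : ∀ a b, hk a b = k a b - (∫ ω, k a (X 0 ω) ∂μ) - (∫ ω, k (X 0 ω) b ∂μ)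
      + ∫ ω, k (X 0 ω) (X 1 ω) ∂μ)
    (hhl : ∀ a b, hlT a b = l a b - (∫ ω, l a (Y 0 ω) ∂μ) - (∫ ω, l (Y 0 ω) b ∂μ)
      + ∫ ω, l (Y 0 ω) (Y 1 ω) ∂μ) :
    ∀ s t u v : Fin 4, s ≠ t → u ≠ v → ({s, t} : Finset (Fin 4)) ≠ {u, v} →
      ∫ ω, hk (X s ω) (X t ω) * hlT (Y u ω) (Y v ω) ∂μ = 0 := by
  intro s t u v hst _ hne
  have := hindep.isProbabilityMeasure
  have hX i : Measurable (X i) := measurable_fst.comp (hmeas i)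
  have hY i : Measurable (Y i) := measurable_snd.comp (hmeas i)
  have hident' i : IdentDistrib (fun ω => (X i ω, Y i ω)) (fun ω => (X 0 ω, Y 0 ω)) μ μ :=
    ⟨(hmeas i).aemeasurable, (hmeas 0).aemeasurable, hident i⟩
  have hlawX i : μ.map (X i) = μ.map (X 0) := ((hident' i).comp measurable_fst).map_eq
  have hlawY i : μ.map (Y i) = μ.map (Y 0) := ((hident' i).comp measurable_snd).map_eq
  have hind01 := hindep.indepFun (show (0 : Fin 4) ≠ 1 by decide)
  have hindX : IndepFun (X 0) (X 1) μ := hind01.comp measurable_fst measurable_fst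
  have hindY : IndepFun (Y 0) (Y 1) μ := hind01.comp measurable_snd measurable_snd
  obtain rfl : hk = doublyCentered (μ.map (X 0)) k := by
    ext a b
    rw [hhk, doublyCentered_map_eq hindX (hX 0).aemeasurable (hX 1).aemeasurable (hlawX 1) hkmeas]
  obtain rfl : hlT = doublyCentered (μ.map (Y 0)) l := by
    ext a b
    rw [hhl, doublyCentered_map_eq hindY (hY 0).aemeasurable (hY 1).aemeasurable (hlawY 1) hlmeas]
  have := Measure.isProbabilityMeasure_map (μ := μ) (hX 0).aemeasurable
  have hkint := integrable_uncurry_of_integrable_sq hindX (hX 0).aemeasurable (hX 1).aemeasurable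
    (hlawX 1) hkmeas hk2
  exact integral_mul_eq_zero_of_pair_ne hmeas hindep hlawX (measurable_doublyCentered hkmeas)
    (measurable_doublyCentered hlmeas) (integral_doublyCentered_left hkint)
    (integral_doublyCentered_right hkint) hst hne

/-- **Proposition 2 of the paper.** Let `(X_i, Y_i)`, `i = 1,…,4`, be i.i.d.
random pairs in `S × T`, let `k`, `l` be square-integrable measurable kernels and `hk`, `hl`
the corresponding doubly centered kernels. Then for index pairs `{s,t} ≠ {u,v}` with
`s ≠ t`, `u ≠ v`, one has `E[hk(X_s,X_t)·hl(Y_u,Y_v)] = 0`. -/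
theorem doublyCentered_uncorrelated
    {Ω S T : Type*} [MeasurableSpace Ω] [MeasurableSpace S] [MeasurableSpace T]
    (μ : Measure Ω) [IsProbabilityMeasure μ]
    (X : Fin 4 → Ω → S) (Y : Fin 4 → Ω → T)
    (hmeas : ∀ s, Measurable (fun ω => (X s ω, Y s ω)))
    (hindep : iIndepFun
      (fun s ω => (X s ω, Y s ω)) μ)
    (hident : ∀ s, Measure.map (fun ω => (X s ω, Y s ω)) μ =
      Measure.map (fun ω => (X 0 ω, Y 0 ω)) μ)
    (k : S → S → ℝ) (l : T → T → ℝ)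
    (hkmeas : Measurable fun p : S × S => k p.1 p.2)
    (hlmeas : Measurable fun p : T × T => l p.1 p.2)
    (hk2 : Integrable (fun ω => (k (X 0 ω) (X 1 ω)) ^ 2) μ)
    (hl2 : Integrable (fun ω => (l (Y 0 ω) (Y 1 ω)) ^ 2) μ)
    (hk : S → S → ℝ) (hlT : T → T → ℝ)
    (hhk : ∀ a b, hk a b = k a b - (∫ ω, k a (X 0 ω) ∂μ) - (∫ ω, k (X 0 ω) b ∂μ)
      + ∫ ω, k (X 0 ω) (X 1 ω) ∂μ)
    (hhl : ∀ a b, hlT a b = l a b - (∫ ω, l a (Y 0 ω) ∂μ) - (∫ ω, l (Y 0 ω) b ∂μ)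
      + ∫ ω, l (Y 0 ω) (Y 1 ω) ∂μ) :
    ∀ s t u v : Fin 4, s ≠ t → u ≠ v → ({s, t} : Finset (Fin 4)) ≠ {u, v} →
      ∫ ω, hk (X s ω) (X t ω) * hlT (Y u ω) (Y v ω) ∂μ = 0 :=
  doublyCentered_uncorrelated_general μ X Y hmeas hindep hident k l hkmeas hlmeas hk2 hk hlT hhk hhl
end

section
/- Let n ≥ 4 and p, q ≥ 1 be integers and let x_{si} (1 ≤ s ≤ n, 1 ≤ i ≤ p) and y_{sj} (1 ≤ s ≤ n, 1 ≤ j ≤ q) be real numbers. For each i let K₁(i) be the n×n matrix with entries |x_{si} − x_{ti}|, and let K(i) be the n×n matrix with zero diagonal and off-diagonal entries |x_{si} − x_{ti}| − g_i(x_{si}) − g_i(x_{ti}) + m_i, where g_i : ℝ → ℝ is an arbitrary function and m_i ∈ ℝ; define L₁(j) and L(j) analogously from y_{sj} with functions G_j and constants M_j. Then for every i and j, K̃(i) = K̃₁(i) and L̃(j) = L̃₁(j), and consequently Σ_{i=1}^p Σ_{j=1}^q (K̃(i)·L̃(j)) = Σ_{i=1}^p Σ_{j=1}^q (K̃₁(i)·L̃₁(j)).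 -/
open Finset Matrix

lemma uCenter_aux {n : ℕ} (hn : 4 ≤ n) (A B : Matrix (Fin n) (Fin n) ℝ)
    (f : Fin n → ℝ) (c : ℝ)
    (hA : ∀ s t, A s t = if s = t then 0 else B s t - f s - f t + c)
    (hBd : ∀ s, B s s = 0) : uCenter A = uCenter B := by
  have hn4 : (4 : ℝ) ≤ (n : ℝ) := by exact_mod_cast hn
  have h1 : (n : ℝ) - 1 ≠ 0 := by linarith
  have h2 : (n : ℝ) - 2 ≠ 0 := by linarith
  have key : ∀ s t, A s t = (B s t - f s - f t + c)
      - (if t = s then (-2 * f s + c) else 0) := by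
    intro s t
    rcases eq_or_ne t s with h | h
    · subst h; simp [hA, hBd]; ring
    · simp [hA, Ne.symm h, h]
  have hrow : ∀ s, ∑ v, A s v =
      (∑ v, B s v) - ((n : ℝ) - 2) * f s - (∑ v, f v) + ((n : ℝ) - 1) * c := by
    intro s
    simp only [key, Finset.sum_sub_distrib, Finset.sum_add_distrib,
      Finset.sum_ite_eq', Finset.mem_univ, if_true, Finset.sum_const,
      Finset.card_univ, Fintype.card_fin, nsmul_eq_mul]
    ring
  have hcol : ∀ t, ∑ u, A u t =
      (∑ u, B u t) - ((n : ℝ) - 2) * f t - (∑ u, f u) + ((n : ℝ) - 1) * c := by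
    intro t
    have key' : ∀ u, A u t = (B u t - f u - f t + c)
        - (if u = t then (-2 * f t + c) else 0) := by
      intro u
      rcases eq_or_ne u t with h | h
      · subst h; simp [hA, hBd]; ring
      · simp [hA, h]
    simp only [key', Finset.sum_sub_distrib, Finset.sum_add_distrib,
      Finset.sum_ite_eq, Finset.sum_ite_eq', Finset.mem_univ, if_true, Finset.sum_const,
      Finset.card_univ, Fintype.card_fin, nsmul_eq_mul]
    ring
  have htot : ∑ u, ∑ v, A u v =
      (∑ u, ∑ v, B u v) - 2 * ((n : ℝ) - 1) * (∑ u, f u)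
        + (n : ℝ) * ((n : ℝ) - 1) * c := by
    simp only [hrow, Finset.sum_sub_distrib, Finset.sum_add_distrib,
      Finset.sum_const, Finset.card_univ, Fintype.card_fin, nsmul_eq_mul,
      ← Finset.mul_sum]
    ring
  funext s t
  unfold uCenter
  rcases eq_or_ne s t with h | h
  · simp [h]
  · simp only [h, if_neg h]
    rw [hA s t, if_neg h, hrow, hcol, htot]
    field_simp
    ring

/-- Double centering of the componentwise distance kernels does not change
their `𝒰`-centered matrices: `K̃(i) = K̃₁(i)`, `L̃(j) = L̃₁(j)`, and hence
`Σ_{i,j} (K̃(i)·L̃(j)) = Σ_{i,j} (K̃₁(i)·L̃₁(j))`. -/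
theorem uCenter_invariant_double_centering (n p q : ℕ) (hn : 4 ≤ n) (hp : 1 ≤ p) (hq : 1 ≤ q)
    (x : Fin n → Fin p → ℝ) (y : Fin n → Fin q → ℝ)
    (g : Fin p → ℝ → ℝ) (m : Fin p → ℝ)
    (G : Fin q → ℝ → ℝ) (M : Fin q → ℝ)
    (K1 K : Fin p → Matrix (Fin n) (Fin n) ℝ)
    (L1 L : Fin q → Matrix (Fin n) (Fin n) ℝ)
    (hK1 : ∀ i s t, K1 i s t = |x s i - x t i|)
    (hK : ∀ i s t, K i s t =
      if s = t then 0 else |x s i - x t i| - g i (x s i) - g i (x t i) + m i)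
    (hL1 : ∀ j s t, L1 j s t = |y s j - y t j|)
    (hL : ∀ j s t, L j s t =
      if s = t then 0 else |y s j - y t j| - G j (y s j) - G j (y t j) + M j) :
    (∀ i, uCenter (K i) = uCenter (K1 i)) ∧
    (∀ j, uCenter (L j) = uCenter (L1 j)) ∧
    (∑ i : Fin p, ∑ j : Fin q, uInner (K i) (L j) =
      ∑ i : Fin p, ∑ j : Fin q, uInner (K1 i) (L1 j)) := by
  have hKe : ∀ i, uCenter (K i) = uCenter (K1 i) := by
    intro i
    apply uCenter_aux hn _ _ (fun s => g i (x s i)) (m i)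
    · intro s t; rw [hK, hK1]
    · intro s; simp [hK1]
  have hLe : ∀ j, uCenter (L j) = uCenter (L1 j) := by
    intro j
    apply uCenter_aux hn _ _ (fun s => G j (y s j)) (M j)
    · intro s t; rw [hL, hL1]
    · intro s; simp [hL1]
  refine ⟨hKe, hLe, ?_⟩
  simp only [uInner, hKe, hLe]
end

section
/- Let n ≥ 4 and let V be the real vector space of symmetric n×n real matrices with zero diagonal. The U-centering map T : V → V, T(A) = Ã, is a well-defined linear map satisfying T∘T = T, and the dimension of its range equals n(n−3)/2. -/
open Finset Matrix

/-- The real vector space `V` of symmetric `n × n` real matrices with zero diagonal,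
as a submodule of the space of all `n × n` real matrices. -/
def symZeroDiag (n : ℕ) : Submodule ℝ (Matrix (Fin n) (Fin n) ℝ) where
  carrier := {A | Aᵀ = A ∧ ∀ s, A s s = 0}
  add_mem' := by
    rintro A B ⟨hA1, hA2⟩ ⟨hB1, hB2⟩
    refine ⟨by rw [Matrix.transpose_add, hA1, hB1], fun s => ?_⟩
    simp [Matrix.add_apply, hA2 s, hB2 s]
  zero_mem' := ⟨by simp, fun s => rfl⟩
  smul_mem' := by
    rintro c A ⟨h1, h2⟩
    refine ⟨by rw [Matrix.transpose_smul, h1], fun s => ?_⟩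
    simp [Matrix.smul_apply, h2 s]

/-!
For `A ∈ V` the row sums of `Ã` vanish (the three correction terms are tuned exactly for this),
and `Ã = A` as soon as the row sums of `A` vanish. Hence `T` is a projection of `V` onto the
kernel of the row-sum map `V → ℝⁿ`. That map is onto for `n ≥ 3`, and `V` has one coordinate per
unordered pair `{s, t}`, so the range of `T` has dimension `n(n-1)/2 - n = n(n-3)/2`.
-/

theorem Finset.sum_ite_eq_zero_sub {ι M : Type*} [Fintype ι] [DecidableEq ι] [AddCommGroup M]
    (i : ι) (f : ι → M) : ∑ j, (if i = j then 0 else f j) = ∑ j, f j - f i := by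
  rw [Finset.sum_ite, Finset.sum_const_zero, zero_add, Finset.filter_ne,
    Finset.sum_erase_eq_sub (Finset.mem_univ i)]

namespace symZeroDiag

variable {n : ℕ} {A : Matrix (Fin n) (Fin n) ℝ}

theorem apply_comm (hA : A ∈ symZeroDiag n) (s t : Fin n) : A t s = A s t :=
  congrFun (congrFun hA.1 s) t

theorem sum_col_eq_sum_row (hA : A ∈ symZeroDiag n) (t : Fin n) :
    ∑ u, A u t = ∑ u, A t u :=
  Finset.sum_congr rfl fun u _ => apply_comm hA t u

end symZeroDiag

noncomputable def uCenterₗ (n : ℕ) :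
    Matrix (Fin n) (Fin n) ℝ →ₗ[ℝ] Matrix (Fin n) (Fin n) ℝ where
  toFun := uCenter
  map_add' A B := by
    ext s t
    by_cases h : s = t
    · simp [uCenter, h]
    · simp only [uCenter, h, if_false, Matrix.add_apply, Finset.sum_add_distrib]
      ring
  map_smul' c A := by
    ext s t
    by_cases h : s = t
    · simp [uCenter, h]
    · simp only [uCenter, h, if_false, Matrix.smul_apply, smul_eq_mul, ← Finset.mul_sum,
        RingHom.id_apply]
      ring

theorem uCenter_mem_symZeroDiag {n : ℕ} {A : Matrix (Fin n) (Fin n) ℝ}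
    (hA : A ∈ symZeroDiag n) : uCenter A ∈ symZeroDiag n := by
  refine ⟨?_, fun s => if_pos rfl⟩
  ext s t
  by_cases h : s = t
  · simp [uCenter, h]
  · simp only [transpose_apply, uCenter, h, Ne.symm h, if_false, symZeroDiag.apply_comm hA s t,
      symZeroDiag.sum_col_eq_sum_row hA]
    ring

noncomputable def uCenterOn (n : ℕ) : symZeroDiag n →ₗ[ℝ] symZeroDiag n :=
  (uCenterₗ n).restrict fun _ => uCenter_mem_symZeroDiag

def rowSum (n : ℕ) : symZeroDiag n →ₗ[ℝ] (Fin n → ℝ) where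
  toFun A s := ∑ t, A.1 s t
  map_add' A B := by
    ext s
    simp [Finset.sum_add_distrib]
  map_smul' c A := by
    ext s
    simp [Finset.mul_sum]

theorem sum_uCenter_row {n : ℕ} (hn : 3 ≤ n) {A : Matrix (Fin n) (Fin n) ℝ}
    (hA : A ∈ symZeroDiag n) (s : Fin n) : ∑ t, uCenter A s t = 0 := by
  have h1 : (n : ℝ) - 1 ≠ 0 := sub_ne_zero.2 (by norm_cast; omega)
  have h2 : (n : ℝ) - 2 ≠ 0 := sub_ne_zero.2 (by norm_cast; omega)
  simp only [uCenter, Finset.sum_ite_eq_zero_sub, hA.2 s, symZeroDiag.sum_col_eq_sum_row hA,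
    Finset.sum_add_distrib, Finset.sum_sub_distrib, ← Finset.sum_div, Finset.sum_const,
    Finset.card_univ, Fintype.card_fin, nsmul_eq_mul]
  field_simp
  ring

theorem uCenter_eq_self {n : ℕ} {A : Matrix (Fin n) (Fin n) ℝ} (hA : A ∈ symZeroDiag n)
    (hrow : ∀ s, ∑ t, A s t = 0) : uCenter A = A := by
  ext s t
  by_cases h : s = t
  · simp [uCenter, h, hA.2 t]
  · simp [uCenter, h, hrow, symZeroDiag.sum_col_eq_sum_row hA]

theorem rowSum_surjective {n : ℕ} (hn : 3 ≤ n) : Function.Surjective (rowSum n) := by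
  have h1 : (n : ℝ) - 1 ≠ 0 := sub_ne_zero.2 (by norm_cast; omega)
  have h2 : (n : ℝ) - 2 ≠ 0 := sub_ne_zero.2 (by norm_cast; omega)
  intro c
  -- ansatz `m_st = α (c_s + c_t) + β` for `s ≠ t`, solved for the row sums `c`
  let M : Matrix (Fin n) (Fin n) ℝ := fun s t =>
    if s = t then 0
    else (c s + c t) / ((n : ℝ) - 2) - (∑ u, c u) / (((n : ℝ) - 1) * ((n : ℝ) - 2))
  have hM : M ∈ symZeroDiag n := by
    refine ⟨?_, fun s => if_pos rfl⟩
    ext s t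
    show M t s = M s t
    simp only [M, eq_comm (a := t), add_comm (c t)]
  refine ⟨⟨M, hM⟩, funext fun s => ?_⟩
  simp only [rowSum, LinearMap.coe_mk, AddHom.coe_mk, M, Finset.sum_ite_eq_zero_sub,
    Finset.sum_sub_distrib, ← Finset.sum_div, Finset.sum_add_distrib, Finset.sum_const,
    Finset.card_univ, Fintype.card_fin, nsmul_eq_mul]
  field_simp
  ring

noncomputable def symZeroDiagEquiv (n : ℕ) :
    symZeroDiag n ≃ₗ[ℝ] ({z : Sym2 (Fin n) // ¬z.IsDiag} → ℝ) where
  toFun A z := Sym2.lift ⟨fun s t => A.1 s t, fun s t => symZeroDiag.apply_comm A.2 t s⟩ z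
  map_add' A B := by
    ext ⟨z, _⟩
    induction z using Sym2.ind
    rfl
  map_smul' c A := by
    ext ⟨z, _⟩
    induction z using Sym2.ind
    rfl
  invFun f := ⟨Matrix.of fun s t =>
      if h : s = t then 0 else f ⟨s(s, t), Sym2.mk_isDiag_iff.not.mpr h⟩, by
      refine ⟨?_, fun s => dif_pos rfl⟩
      ext s t
      by_cases h : s = t
      · subst h; rfl
      · rw [transpose_apply, of_apply, of_apply, dif_neg (Ne.symm h), dif_neg h]
        exact congrArg f (Subtype.ext Sym2.eq_swap)⟩
  left_inv A := by
    ext s t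
    by_cases h : s = t
    · simp [h, A.2.2 t]
    · simp [h]
  right_inv f := by
    ext ⟨z, hz⟩
    induction z using Sym2.ind with
    | _ s t => simp [Sym2.mk_isDiag_iff.not.mp hz]

theorem finrank_symZeroDiag (n : ℕ) : Module.finrank ℝ (symZeroDiag n) = n.choose 2 := by
  rw [(symZeroDiagEquiv n).finrank_eq, Module.finrank_fintype_fun_eq_card,
    Sym2.card_subtype_not_diag, Fintype.card_fin]

theorem uCenterOn_isProj {n : ℕ} (hn : 3 ≤ n) :
    LinearMap.IsProj (LinearMap.ker (rowSum n)) (uCenterOn n) where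
  map_mem A := funext (sum_uCenter_row hn A.2)
  map_id A hA := Subtype.ext (uCenter_eq_self A.2 (congrFun hA))

theorem finrank_ker_rowSum_add {n : ℕ} (hn : 3 ≤ n) :
    Module.finrank ℝ (LinearMap.ker (rowSum n)) + n = n.choose 2 := by
  have h := (rowSum n).finrank_range_add_finrank_ker
  rw [LinearMap.range_eq_top.mpr (rowSum_surjective hn), finrank_top,
    Module.finrank_fintype_fun_eq_card, Fintype.card_fin, finrank_symZeroDiag] at h
  omega

theorem Nat.choose_two_eq_mul_sub_three_div_two_add {n : ℕ} (hn : 3 ≤ n) :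
    n.choose 2 = n * (n - 3) / 2 + n := by
  obtain ⟨m, rfl⟩ := Nat.exists_eq_add_of_le' hn
  rw [Nat.choose_two_right, ← Nat.add_mul_div_right _ _ two_pos,
    show m + 3 - 1 = m + 2 by omega, Nat.add_sub_cancel]
  ring_nf

/-- For `n ≥ 4`, `𝒰`-centering is a well-defined linear map
`T : V → V` on the space `V` of symmetric `n × n` matrices with zero diagonal, it is
idempotent (`T ∘ T = T`), and the dimension of its range is `n(n−3)/2`. -/
theorem uCenter_linear_idempotent_rank (n : ℕ) (hn : 4 ≤ n) :
    ∃ T : symZeroDiag n →ₗ[ℝ] symZeroDiag n,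
      (∀ A : symZeroDiag n, (T A : Matrix (Fin n) (Fin n) ℝ) = uCenter (A : Matrix (Fin n) (Fin n) ℝ)) ∧
      T ∘ₗ T = T ∧
      Module.finrank ℝ (LinearMap.range T) = n * (n - 3) / 2 := by
  have h3 : 3 ≤ n := by omega
  have hT := uCenterOn_isProj h3
  refine ⟨uCenterOn n, fun _ => rfl, hT.isIdempotentElem.eq, ?_⟩
  have hrank := finrank_ker_rowSum_add h3
  rw [Nat.choose_two_eq_mul_sub_three_div_two_add h3] at hrank
  rw [hT.range]
  omega
end
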